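/- Let B be an n×d real matrix with full column rank (so BᵀB is invertible). Then ‖BBᵀ − B(BᵀB)^{-1}Bᵀ‖_F = ‖Id_d − BᵀB‖_F. -/

import Mathlib

open Matrix

noncomputable def frobNorm {m n : ℕ} (A : Matrix (Fin m) (Fin n) ℝ) : ℝ :=
  Real.sqrt (Matrix.trace (Aᵀ * A))

/-! With `G = BᵀB`, the difference `BBᵀ - BG⁻¹Bᵀ` is the sandwich `B(1 - G⁻¹)Bᵀ`. Cyclicity of the
trace moves the outer factors `B`, `Bᵀ` inwards, where they recombine into `G`, and
`G(1 - G⁻¹) = (1 - G⁻¹)G = G - 1`. -/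

theorem Matrix.trace_transpose_mul_self_mul_mul_transpose {m n R : Type*} [Fintype m] [Fintype n]
    [CommSemiring R] (B : Matrix m n R) (X : Matrix n n R) :
    trace ((B * X * Bᵀ)ᵀ * (B * X * Bᵀ)) = trace ((Bᵀ * B * X)ᵀ * (X * (Bᵀ * B))) := by
  simp only [transpose_mul, transpose_transpose, Matrix.mul_assoc]
  rw [trace_mul_comm]
  simp only [Matrix.mul_assoc]

theorem frobNorm_sub_comm {m n : ℕ} (A C : Matrix (Fin m) (Fin n) ℝ) :
    frobNorm (A - C) = frobNorm (C - A) := by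
  rw [frobNorm, frobNorm, ← neg_sub C A, transpose_neg, Matrix.neg_mul, Matrix.mul_neg, neg_neg]

theorem frob_norm_proj_approx {n d : ℕ} (B : Matrix (Fin n) (Fin d) ℝ)
    [Invertible (Bᵀ * B)] :
    frobNorm (B * Bᵀ - B * (Bᵀ * B)⁻¹ * Bᵀ) = frobNorm ((1 : Matrix (Fin d) (Fin d) ℝ) - Bᵀ * B) := by
  have h_sandwich : B * Bᵀ - B * (Bᵀ * B)⁻¹ * Bᵀ = B * (1 - (Bᵀ * B)⁻¹) * Bᵀ := by
    rw [Matrix.mul_sub, Matrix.mul_one, Matrix.sub_mul]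
  have h_left : Bᵀ * B * (1 - (Bᵀ * B)⁻¹) = Bᵀ * B - 1 := by
    rw [mul_sub, mul_one, mul_inv_of_invertible]
  have h_right : (1 - (Bᵀ * B)⁻¹) * (Bᵀ * B) = Bᵀ * B - 1 := by
    rw [sub_mul, one_mul, inv_mul_of_invertible]
  rw [frobNorm_sub_comm 1, h_sandwich, frobNorm, trace_transpose_mul_self_mul_mul_transpose,
    h_left, h_right, frobNorm]
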